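/- arXiv:2009.13327 — 8 statements merged into one kernel-verified Lean document; each statement's English description precedes it below -/
import Mathlib

section
/- Let m ≥ 1, x₀ ∈ ℝ^m, let f : [0,∞) × ℝ^m × ℝ^m → ℝ^m be continuous, and let g₁,…,g_m : ℝ → ℝ be continuous. Fix α > 0 and T > 0. Set M := max of ‖f(t,u,v)‖ over t ∈ [0,T], u in the closed box ∏_{i=1}^m [x₀ᵢ−α, x₀ᵢ+α], and v ∈ ∏_{i=1}^m g_i([x₀ᵢ−α, x₀ᵢ+α]), and assume M > 0. Assume there exist constants L > 0 and L_α > 0 such that ‖f(t,u₁,v₁) − f(t,u₂,v₂)‖ ≤ L(‖u₁−u₂‖ + ‖v₁−v₂‖) for all t ∈ [0,T], u₁,u₂ in the box and v₁,v₂ in ∏_{i=1}^m g_i([x₀ᵢ−α, x₀ᵢ+α]), and |g_i(x) − g_i(y)| ≤ L_α |x − y| for all x,y ∈ [x₀ᵢ−α, x₀ᵢ+α] and each i. Then for every T̄ with 0 < T̄ < min{α/M, 1/(L(1+L_α√m)), T} there exists a continuously differentiable function x : [0,T̄] → ℝ^m such that x(0) = x₀ and, for all t ∈ [0,T̄], ẋ(t)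 = f(t, x(t), (max_{s∈[0,t]} g₁(x₁(s)), …, max_{s∈[0,t]} g_m(x_m(s)))). -/
/-!
The right-hand side `F x t = f(t, x(t), (max_{[0,t]} gᵢ ∘ xᵢ)ᵢ)` is a functional of the whole
past of the curve `x`. Taking a maximum over `[0,t]` does not increase sup-distances, so on curves
with values in the box `F` is Lipschitz in the sup norm with constant `L (1 + Lα √m)`, and it is
bounded by `M`. Hence on `[0, T̄]` the Picard operator `x ↦ x₀ + ∫₀ᵗ F x` maps curves in the box
to curves in the box (as `M T̄ < α`) and is a contraction (as `T̄ L (1 + Lα √m) < 1`). Its fixed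
point solves the integral equation, hence the differential equation.
-/

open Set intervalIntegral

section EuclideanBox

variable {ι : Type*}

theorem EuclideanSpace.norm_le_sqrt_card_mul [Fintype ι] {v : EuclideanSpace ℝ ι} {C : ℝ}
    (hC : 0 ≤ C) (hv : ∀ i, |v i| ≤ C) : ‖v‖ ≤ √(Fintype.card ι) * C := by
  rw [EuclideanSpace.norm_eq, ← Real.sqrt_sq hC, ← Real.sqrt_mul (Nat.cast_nonneg _)]
  refine Real.sqrt_le_sqrt ?_
  calc ∑ i, ‖v i‖ ^ 2 ≤ ∑ _i : ι, C ^ 2 := by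
        gcongr with i
        exact (Real.norm_eq_abs _).trans_le (hv i)
    _ = Fintype.card ι * C ^ 2 := by simp

def coordBox (K : ι → Set ℝ) : Set (EuclideanSpace ℝ ι) := {v | ∀ i, v i ∈ K i}

theorem isClosed_coordBox {K : ι → Set ℝ} (hK : ∀ i, IsClosed (K i)) : IsClosed (coordBox K) := by
  simp only [coordBox, ofPred_forall]
  exact isClosed_iInter fun i => (hK i).preimage (PiLp.continuous_apply 2 _ i)

theorem add_mem_coordBox_Icc [Fintype ι] (x₀ : EuclideanSpace ℝ ι) {v : EuclideanSpace ℝ ι} {α : ℝ}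
    (hv : ‖v‖ ≤ α) : x₀ + v ∈ coordBox fun i => Icc (x₀ i - α) (x₀ i + α) := by
  intro i
  have hvi := abs_le.1 (((Real.norm_eq_abs _).symm.trans_le (PiLp.norm_apply_le v i)).trans hv)
  simp only [PiLp.add_apply, mem_Icc]
  constructor <;> linarith [hvi.1, hvi.2]

end EuclideanBox

section RunningMax

/-- For `t < 0` this is the junk value `sSup ∅ = 0`. -/
noncomputable def runningMax (w : ℝ → ℝ) (t : ℝ) : ℝ := sSup (w '' Icc 0 t)

variable {w a b : ℝ → ℝ} {s t ε : ℝ}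

theorem runningMax_mem_image (hw : Continuous w) (ht : 0 ≤ t) : runningMax w t ∈ w '' Icc 0 t :=
  (isCompact_Icc.image hw).sSup_mem ((nonempty_Icc.2 ht).image w)

theorem le_runningMax (hw : Continuous w) (hs : s ∈ Icc 0 t) : w s ≤ runningMax w t :=
  le_csSup (isCompact_Icc.image hw).bddAbove (mem_image_of_mem w hs)

theorem runningMax_le_add (hb : Continuous b) (ht : 0 ≤ t) (h : ∀ s ∈ Icc 0 t, a s ≤ b s + ε) :
    runningMax a t ≤ runningMax b t + ε :=
  csSup_le ((nonempty_Icc.2 ht).image a) <| forall_mem_image.2 fun s hs =>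
    (h s hs).trans (by gcongr; exact le_runningMax hb hs)

theorem abs_runningMax_sub_le (ha : Continuous a) (hb : Continuous b) (ht : 0 ≤ t)
    (h : ∀ s ∈ Icc 0 t, |a s - b s| ≤ ε) : |runningMax a t - runningMax b t| ≤ ε := by
  refine abs_sub_le_iff.2 ⟨?_, ?_⟩ <;> rw [sub_le_iff_le_add']
  · refine runningMax_le_add hb ht fun s hs => ?_
    linarith [(abs_sub_le_iff.1 (h s hs)).1]
  · refine runningMax_le_add ha ht fun s hs => ?_
    linarith [(abs_sub_le_iff.1 (h s hs)).2]

theorem continuousOn_runningMax (hw : Continuous w) : ContinuousOn (runningMax w) (Ici 0) := by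
  -- rescaling `[0, t]` to `[0, 1]` makes this a maximum over a fixed compact set
  have hscaled : Continuous fun t => sSup ((fun s => w (s * t)) '' Icc 0 1) :=
    isCompact_Icc.continuous_sSup (f := fun t s => w (s * t)) (by fun_prop)
  refine hscaled.continuousOn.congr fun t (ht : 0 ≤ t) => ?_
  show sSup (w '' Icc 0 t) = sSup ((w ∘ (· * t)) '' Icc 0 1)
  rw [image_comp, image_mul_right_Icc zero_le_one ht, zero_mul, one_mul]

end RunningMax

section RunningMaxVec

variable {ι : Type*} {g : ι → ℝ → ℝ} {u u₁ u₂ : ℝ → EuclideanSpace ℝ ι}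
  {K : ι → Set ℝ} {t : ℝ}

noncomputable def runningMaxVec (g : ι → ℝ → ℝ) (u : ℝ → EuclideanSpace ℝ ι) (t : ℝ) :
    EuclideanSpace ℝ ι :=
  (WithLp.equiv 2 (ι → ℝ)).symm fun i => runningMax (fun s => g i (u s i)) t

theorem continuousOn_runningMaxVec (hg : ∀ i, Continuous (g i)) (hu : Continuous u) :
    ContinuousOn (runningMaxVec g u) (Ici 0) :=
  (PiLp.continuous_toLp 2 _).comp_continuousOn <|
    continuousOn_pi.2 fun i => continuousOn_runningMax (by fun_prop)

theorem runningMaxVec_mem_coordBox (hg : ∀ i, Continuous (g i)) (hu : Continuous u) (ht : 0 ≤ t)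
    (huK : MapsTo u (Icc 0 t) (coordBox K)) :
    runningMaxVec g u t ∈ coordBox fun i => g i '' K i := fun i => by
  obtain ⟨s, hs, hmax⟩ := runningMax_mem_image (w := fun s => g i (u s i)) (by fun_prop) ht
  exact ⟨u s i, huK hs i, hmax⟩

theorem norm_runningMaxVec_sub_le [Fintype ι] {Lg D : ℝ} (hg : ∀ i, Continuous (g i)) (hLg : 0 ≤ Lg)
    (hgL : ∀ i, ∀ x ∈ K i, ∀ y ∈ K i, |g i x - g i y| ≤ Lg * |x - y|)
    (hu₁ : Continuous u₁) (hu₂ : Continuous u₂) (ht : 0 ≤ t)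
    (hu₁K : MapsTo u₁ (Icc 0 t) (coordBox K)) (hu₂K : MapsTo u₂ (Icc 0 t) (coordBox K))
    (hD : ∀ s ∈ Icc 0 t, ‖u₁ s - u₂ s‖ ≤ D) :
    ‖runningMaxVec g u₁ t - runningMaxVec g u₂ t‖ ≤ √(Fintype.card ι) * (Lg * D) := by
  have hD0 : 0 ≤ D := (norm_nonneg _).trans (hD 0 (left_mem_Icc.2 ht))
  refine EuclideanSpace.norm_le_sqrt_card_mul (by positivity) fun i =>
    abs_runningMax_sub_le (by fun_prop) (by fun_prop) ht fun s hs => ?_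
  calc |g i (u₁ s i) - g i (u₂ s i)| ≤ Lg * |u₁ s i - u₂ s i| := hgL i _ (hu₁K hs i) _ (hu₂K hs i)
    _ ≤ Lg * D := by
      gcongr
      exact (Real.norm_eq_abs _).symm.trans_le ((PiLp.norm_apply_le _ i).trans (hD s hs))

end RunningMaxVec

section FunctionalPicard

variable {E : Type*} [NormedAddCommGroup E] [NormedSpace ℝ E]

theorem hasDerivWithinAt_integral_Icc [CompleteSpace E] {φ : ℝ → E} {a b t : ℝ}
    (hφ : ContinuousOn φ (Icc a b)) (ht : t ∈ Icc a b) :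
    HasDerivWithinAt (fun τ => ∫ s in a..τ, φ s) (φ t) (Icc a b) t := by
  -- this `Fact` provides the `FTCFilter` instance for one-sided derivatives within `Icc a b`
  have : Fact (t ∈ Icc a b) := ⟨ht⟩
  exact integral_hasDerivWithinAt_right
    ((hφ.mono (Icc_subset_Icc_right ht.2)).intervalIntegrable_of_Icc ht.1)
    (hφ.stronglyMeasurableAtFilter_nhdsWithin measurableSet_Icc t) (hφ t ht)

theorem norm_integral_le_mul_of_norm_le {φ : ℝ → E} {T t C : ℝ}
    (hφ : ∀ s ∈ Icc 0 T, ‖φ s‖ ≤ C) (ht : t ∈ Icc 0 T) : ‖∫ s in 0..t, φ s‖ ≤ C * T := by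
  have hC : 0 ≤ C := (norm_nonneg _).trans (hφ 0 ⟨le_rfl, ht.1.trans ht.2⟩)
  calc ‖∫ s in 0..t, φ s‖ ≤ C * |t - 0| := by
        refine norm_integral_le_of_norm_le_const fun s hs => hφ s ?_
        rw [uIoc_of_le ht.1] at hs
        exact ⟨hs.1.le, hs.2.trans ht.2⟩
    _ ≤ C * T := by
        rw [sub_zero, abs_of_nonneg ht.1]
        exact mul_le_mul_of_nonneg_left ht.2 hC

def curvesIn (T : ℝ) (B : Set E) : Set (ℝ → E) := {u | Continuous u ∧ MapsTo u (Icc 0 T) B}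

variable [CompleteSpace E] {F : (ℝ → E) → ℝ → E} {B : Set E} {x₀ : E} {T c : ℝ}

theorem exists_eq_integral_of_contraction (hT : 0 ≤ T) (hB : IsClosed B) (hx₀ : x₀ ∈ B)
    (hc : 0 ≤ c) (hTc : T * c < 1)
    (hF : ∀ u ∈ curvesIn T B, ContinuousOn (F u) (Icc 0 T))
    (hmaps : ∀ u ∈ curvesIn T B, ∀ t ∈ Icc 0 T, x₀ + ∫ s in 0..t, F u s ∈ B)
    (hlip : ∀ u₁ ∈ curvesIn T B, ∀ u₂ ∈ curvesIn T B, ∀ D : ℝ,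
      (∀ s ∈ Icc 0 T, ‖u₁ s - u₂ s‖ ≤ D) → ∀ s ∈ Icc 0 T, ‖F u₁ s - F u₂ s‖ ≤ c * D) :
    ∃ x ∈ curvesIn T B, ∀ t ∈ Icc 0 T, x t = x₀ + ∫ s in 0..t, F x s := by
  -- the Picard operator acts on continuous maps `[0, T] → B`, extended constantly to `ℝ`
  set S : Set C(Icc 0 T, E) := {y | ∀ s, y s ∈ B}
  have hS : IsClosed S := by
    simp only [S, ofPred_forall]
    exact isClosed_iInter fun s => hB.preimage (continuous_eval_const s)
  have : CompleteSpace S := hS.completeSpace_coe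
  have : Nonempty S := ⟨⟨ContinuousMap.const _ x₀, fun _ => hx₀⟩⟩
  have hext (y : S) : IccExtend hT y.1 ∈ curvesIn T B :=
    ⟨y.1.continuous.comp continuous_projIcc, fun s hs => by
      rw [IccExtend_of_mem hT _ hs]; exact y.2 _⟩
  have hint (y : S) {t : ℝ} (ht : t ∈ Icc 0 T) :
      IntervalIntegrable (F (IccExtend hT y.1)) MeasureTheory.volume 0 t :=
    ((hF _ (hext y)).mono (Icc_subset_Icc_right ht.2)).intervalIntegrable_of_Icc ht.1
  let Φ : S → S := fun y =>
    ⟨⟨fun t => x₀ + ∫ s in 0..t.1, F (IccExtend hT y.1) s,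
      (continuousOn_const.add fun t ht =>
        (hasDerivWithinAt_integral_Icc (hF _ (hext y)) ht).continuousWithinAt).domRestrict⟩,
      fun t => hmaps _ (hext y) t.1 t.2⟩
  have hΦ : ContractingWith ⟨T * c, by positivity⟩ Φ := by
    refine ⟨hTc, LipschitzWith.of_dist_le_mul fun y₁ y₂ => ?_⟩
    show dist (Φ y₁).1 (Φ y₂).1 ≤ T * c * dist y₁.1 y₂.1
    rw [ContinuousMap.dist_le (by positivity)]
    intro t
    have hD (s) (hs : s ∈ Icc 0 T) :
        ‖IccExtend hT y₁.1 s - IccExtend hT y₂.1 s‖ ≤ dist y₁.1 y₂.1 := by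
      rw [IccExtend_of_mem hT _ hs, IccExtend_of_mem hT _ hs, ← dist_eq_norm]
      exact ContinuousMap.dist_apply_le_dist _
    calc dist ((Φ y₁).1 t) ((Φ y₂).1 t)
        = ‖∫ s in 0..t.1, (F (IccExtend hT y₁.1) s - F (IccExtend hT y₂.1) s)‖ := by
          rw [dist_eq_norm, integral_sub (hint y₁ t.2) (hint y₂ t.2)]
          exact congrArg norm (add_sub_add_left_eq_sub _ _ _)
      _ ≤ c * dist y₁.1 y₂.1 * T :=
          norm_integral_le_mul_of_norm_le (hlip _ (hext y₁) _ (hext y₂) _ hD) t.2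
      _ = T * c * dist y₁.1 y₂.1 := by ring
  refine ⟨IccExtend hT (hΦ.fixedPoint Φ).1, hext _, fun t ht => ?_⟩
  rw [IccExtend_of_mem hT _ ht]
  exact congrArg (fun y : S => y.1 ⟨t, ht⟩) hΦ.fixedPoint_isFixedPt.symm

theorem exists_hasDerivWithinAt_of_contraction (hT : 0 ≤ T) (hB : IsClosed B) (hx₀ : x₀ ∈ B)
    (hc : 0 ≤ c) (hTc : T * c < 1)
    (hF : ∀ u ∈ curvesIn T B, ContinuousOn (F u) (Icc 0 T))
    (hmaps : ∀ u ∈ curvesIn T B, ∀ t ∈ Icc 0 T, x₀ + ∫ s in 0..t, F u s ∈ B)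
    (hlip : ∀ u₁ ∈ curvesIn T B, ∀ u₂ ∈ curvesIn T B, ∀ D : ℝ,
      (∀ s ∈ Icc 0 T, ‖u₁ s - u₂ s‖ ≤ D) → ∀ s ∈ Icc 0 T, ‖F u₁ s - F u₂ s‖ ≤ c * D) :
    ∃ x : ℝ → E, ContinuousOn x (Icc 0 T) ∧ x 0 = x₀ ∧
      ∀ t ∈ Icc 0 T, HasDerivWithinAt x (F x t) (Icc 0 T) t := by
  obtain ⟨x, hx, hxeq⟩ := exists_eq_integral_of_contraction hT hB hx₀ hc hTc hF hmaps hlip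
  refine ⟨x, hx.1.continuousOn, by simpa using hxeq 0 (left_mem_Icc.2 hT), fun t ht => ?_⟩
  exact ((hasDerivWithinAt_integral_Icc (hF x hx) ht).const_add x₀).congr hxeq (hxeq t ht)

end FunctionalPicard

section SystemWithMaxima

variable {ι : Type*}
  {f : ℝ → EuclideanSpace ℝ ι → EuclideanSpace ℝ ι → EuclideanSpace ℝ ι} {g : ι → ℝ → ℝ}
  {u u₁ u₂ : ℝ → EuclideanSpace ℝ ι} {K : ι → Set ℝ} {T : ℝ}

noncomputable def fieldWithMaxima
    (f : ℝ → EuclideanSpace ℝ ι → EuclideanSpace ℝ ι → EuclideanSpace ℝ ι) (g : ι → ℝ → ℝ)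
    (u : ℝ → EuclideanSpace ℝ ι) (t : ℝ) : EuclideanSpace ℝ ι :=
  f t (u t) (runningMaxVec g u t)

theorem continuousOn_fieldWithMaxima
    (hf : ContinuousOn (fun p : ℝ × EuclideanSpace ℝ ι × EuclideanSpace ℝ ι => f p.1 p.2.1 p.2.2)
      (Ici 0 ×ˢ univ ×ˢ univ))
    (hg : ∀ i, Continuous (g i)) (hu : Continuous u) :
    ContinuousOn (fieldWithMaxima f g u) (Ici 0) :=
  hf.comp (continuousOn_id.prodMk (hu.continuousOn.prodMk (continuousOn_runningMaxVec hg hu)))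
    fun _ hs => ⟨hs, trivial, trivial⟩

theorem add_integral_fieldWithMaxima_mem [Fintype ι] {x₀ : EuclideanSpace ℝ ι} {α M t : ℝ}
    (hg : ∀ i, Continuous (g i))
    (hbound : ∀ s ∈ Icc 0 T, ∀ v ∈ coordBox fun i => Icc (x₀ i - α) (x₀ i + α),
      ∀ w ∈ coordBox fun i => g i '' Icc (x₀ i - α) (x₀ i + α), ‖f s v w‖ ≤ M)
    (hMT : M * T ≤ α) (hu : u ∈ curvesIn T (coordBox fun i => Icc (x₀ i - α) (x₀ i + α)))
    (ht : t ∈ Icc 0 T) :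
    x₀ + ∫ s in 0..t, fieldWithMaxima f g u s ∈ coordBox fun i => Icc (x₀ i - α) (x₀ i + α) := by
  refine add_mem_coordBox_Icc x₀ ((norm_integral_le_mul_of_norm_le (fun s hs => ?_) ht).trans hMT)
  exact hbound s hs _ (hu.2 hs) _ <|
    runningMaxVec_mem_coordBox hg hu.1 hs.1 (hu.2.mono_left (Icc_subset_Icc_right hs.2))

theorem norm_fieldWithMaxima_sub_le [Fintype ι] {L Lg D s : ℝ} (hg : ∀ i, Continuous (g i))
    (hL : 0 ≤ L) (hLg : 0 ≤ Lg)
    (hfL : ∀ s ∈ Icc 0 T, ∀ v₁ v₂ w₁ w₂ : EuclideanSpace ℝ ι, v₁ ∈ coordBox K → v₂ ∈ coordBox K →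
      w₁ ∈ coordBox (fun i => g i '' K i) → w₂ ∈ coordBox (fun i => g i '' K i) →
      ‖f s v₁ w₁ - f s v₂ w₂‖ ≤ L * (‖v₁ - v₂‖ + ‖w₁ - w₂‖))
    (hgL : ∀ i, ∀ x ∈ K i, ∀ y ∈ K i, |g i x - g i y| ≤ Lg * |x - y|)
    (hu₁ : u₁ ∈ curvesIn T (coordBox K)) (hu₂ : u₂ ∈ curvesIn T (coordBox K))
    (hD : ∀ s ∈ Icc 0 T, ‖u₁ s - u₂ s‖ ≤ D) (hs : s ∈ Icc 0 T) :
    ‖fieldWithMaxima f g u₁ s - fieldWithMaxima f g u₂ s‖ ≤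
      L * (1 + Lg * √(Fintype.card ι)) * D := by
  have hsT : Icc 0 s ⊆ Icc 0 T := Icc_subset_Icc_right hs.2
  calc _ ≤ L * (‖u₁ s - u₂ s‖ + ‖runningMaxVec g u₁ s - runningMaxVec g u₂ s‖) :=
        hfL s hs _ _ _ _ (hu₁.2 hs) (hu₂.2 hs)
          (runningMaxVec_mem_coordBox hg hu₁.1 hs.1 (hu₁.2.mono_left hsT))
          (runningMaxVec_mem_coordBox hg hu₂.1 hs.1 (hu₂.2.mono_left hsT))
    _ ≤ L * (D + √(Fintype.card ι) * (Lg * D)) := by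
        gcongr
        · exact hD s hs
        · exact norm_runningMaxVec_sub_le hg hLg hgL hu₁.1 hu₂.1 hs.1 (hu₁.2.mono_left hsT)
            (hu₂.2.mono_left hsT) fun σ hσ => hD σ (hsT hσ)
    _ = L * (1 + Lg * √(Fintype.card ι)) * D := by ring

end SystemWithMaxima

theorem exists_solution_system_with_maxima_general
    (m : ℕ) (x₀ : EuclideanSpace ℝ (Fin m))
    (f : ℝ → EuclideanSpace ℝ (Fin m) → EuclideanSpace ℝ (Fin m) → EuclideanSpace ℝ (Fin m))
    (g : Fin m → ℝ → ℝ)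
    (hf : ContinuousOn
      (fun p : ℝ × EuclideanSpace ℝ (Fin m) × EuclideanSpace ℝ (Fin m) => f p.1 p.2.1 p.2.2)
      (Set.Ici 0 ×ˢ Set.univ ×ˢ Set.univ))
    (hg : ∀ i, Continuous (g i))
    (α T M L Lα : ℝ) (hα : 0 < α)
    (hM : IsGreatest
      ((fun p : ℝ × EuclideanSpace ℝ (Fin m) × EuclideanSpace ℝ (Fin m) => ‖f p.1 p.2.1 p.2.2‖) ''
        (Set.Icc 0 T ×ˢ {u | ∀ i, u i ∈ Set.Icc (x₀ i - α) (x₀ i + α)} ×ˢ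
          {v | ∀ i, v i ∈ g i '' Set.Icc (x₀ i - α) (x₀ i + α)})) M)
    (hMpos : 0 < M) (hL : 0 < L) (hLα : 0 < Lα)
    (hfL : ∀ t ∈ Set.Icc (0:ℝ) T, ∀ u₁ u₂ v₁ v₂ : EuclideanSpace ℝ (Fin m),
      (∀ i, u₁ i ∈ Set.Icc (x₀ i - α) (x₀ i + α)) →
      (∀ i, u₂ i ∈ Set.Icc (x₀ i - α) (x₀ i + α)) →
      (∀ i, v₁ i ∈ g i '' Set.Icc (x₀ i - α) (x₀ i + α)) →
      (∀ i, v₂ i ∈ g i '' Set.Icc (x₀ i - α) (x₀ i + α)) →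
      ‖f t u₁ v₁ - f t u₂ v₂‖ ≤ L * (‖u₁ - u₂‖ + ‖v₁ - v₂‖))
    (hgL : ∀ i, ∀ x ∈ Set.Icc (x₀ i - α) (x₀ i + α), ∀ y ∈ Set.Icc (x₀ i - α) (x₀ i + α),
      |g i x - g i y| ≤ Lα * |x - y|)
    (T' : ℝ) (hT'pos : 0 < T')
    (hT' : T' < min (min (α / M) (1 / (L * (1 + Lα * Real.sqrt m)))) T) :
    ∃ x : ℝ → EuclideanSpace ℝ (Fin m),
      ContinuousOn x (Set.Icc 0 T') ∧ x 0 = x₀ ∧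
      ∀ t ∈ Set.Icc (0:ℝ) T', HasDerivWithinAt x
        (f t (x t) ((WithLp.equiv 2 (Fin m → ℝ)).symm
          fun i => sSup ((fun s => g i (x s i)) '' Set.Icc 0 t)))
        (Set.Icc 0 T') t := by
  have hT'T : T' ≤ T := hT'.le.trans (min_le_right _ _)
  have hMT' : M * T' ≤ α := by
    have := hT'.trans_le ((min_le_left _ _).trans (min_le_left _ _))
    rw [lt_div_iff₀' hMpos] at this
    exact this.le
  have hcT' : T' * (L * (1 + Lα * √m)) < 1 := by
    have := hT'.trans_le ((min_le_left _ _).trans (min_le_right _ _))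
    rwa [lt_div_iff₀ (by positivity)] at this
  exact exists_hasDerivWithinAt_of_contraction (F := fieldWithMaxima f g) hT'pos.le
    (isClosed_coordBox fun _ => isClosed_Icc) (fun i => ⟨by linarith, by linarith⟩)
    (by positivity) hcT'
    (fun u hu => (continuousOn_fieldWithMaxima hf hg hu.1).mono Icc_subset_Ici_self)
    (fun u hu t ht => add_integral_fieldWithMaxima_mem hg
      (fun s hs v hv w hw => hM.2 ⟨(s, v, w), ⟨⟨hs.1, hs.2.trans hT'T⟩, hv, hw⟩, rfl⟩) hMT' hu ht)
    (fun u₁ hu₁ u₂ hu₂ D hD s hs => by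
      simpa only [Fintype.card_fin] using norm_fieldWithMaxima_sub_le hg hL.le hLα.le
        (fun s hs => hfL s ⟨hs.1, hs.2.trans hT'T⟩) hgL hu₁ hu₂ hD hs)

/-- Local existence for the system of differential equations with maxima
`ẋ(t) = f(t, x(t), (max_{[0,t]} g₁∘x₁, …, max_{[0,t]} g_m∘x_m))`, `x(0) = x₀`. -/
theorem exists_solution_system_with_maxima
    (m : ℕ) (hm : 1 ≤ m) (x₀ : EuclideanSpace ℝ (Fin m))
    (f : ℝ → EuclideanSpace ℝ (Fin m) → EuclideanSpace ℝ (Fin m) → EuclideanSpace ℝ (Fin m))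
    (g : Fin m → ℝ → ℝ)
    (hf : ContinuousOn
      (fun p : ℝ × EuclideanSpace ℝ (Fin m) × EuclideanSpace ℝ (Fin m) => f p.1 p.2.1 p.2.2)
      (Set.Ici 0 ×ˢ Set.univ ×ˢ Set.univ))
    (hg : ∀ i, Continuous (g i))
    (α T M L Lα : ℝ) (hα : 0 < α) (hT : 0 < T)
    (hM : IsGreatest
      ((fun p : ℝ × EuclideanSpace ℝ (Fin m) × EuclideanSpace ℝ (Fin m) => ‖f p.1 p.2.1 p.2.2‖) ''
        (Set.Icc 0 T ×ˢ {u | ∀ i, u i ∈ Set.Icc (x₀ i - α) (x₀ i + α)} ×ˢ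
          {v | ∀ i, v i ∈ g i '' Set.Icc (x₀ i - α) (x₀ i + α)})) M)
    (hMpos : 0 < M) (hL : 0 < L) (hLα : 0 < Lα)
    (hfL : ∀ t ∈ Set.Icc (0:ℝ) T, ∀ u₁ u₂ v₁ v₂ : EuclideanSpace ℝ (Fin m),
      (∀ i, u₁ i ∈ Set.Icc (x₀ i - α) (x₀ i + α)) →
      (∀ i, u₂ i ∈ Set.Icc (x₀ i - α) (x₀ i + α)) →
      (∀ i, v₁ i ∈ g i '' Set.Icc (x₀ i - α) (x₀ i + α)) →
      (∀ i, v₂ i ∈ g i '' Set.Icc (x₀ i - α) (x₀ i + α)) →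
      ‖f t u₁ v₁ - f t u₂ v₂‖ ≤ L * (‖u₁ - u₂‖ + ‖v₁ - v₂‖))
    (hgL : ∀ i, ∀ x ∈ Set.Icc (x₀ i - α) (x₀ i + α), ∀ y ∈ Set.Icc (x₀ i - α) (x₀ i + α),
      |g i x - g i y| ≤ Lα * |x - y|)
    (T' : ℝ) (hT'pos : 0 < T')
    (hT' : T' < min (min (α / M) (1 / (L * (1 + Lα * Real.sqrt m)))) T) :
    ∃ x : ℝ → EuclideanSpace ℝ (Fin m),
      ContinuousOn x (Set.Icc 0 T') ∧ x 0 = x₀ ∧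
      ∀ t ∈ Set.Icc (0:ℝ) T', HasDerivWithinAt x
        (f t (x t) ((WithLp.equiv 2 (Fin m → ℝ)).symm
          fun i => sSup ((fun s => g i (x s i)) '' Set.Icc 0 t)))
        (Set.Icc 0 T') t :=
  exists_solution_system_with_maxima_general m x₀ f g hf hg α T M L Lα hα hM hMpos hL hLα hfL hgL T'
    hT'pos hT'
end

section
/- Let x₀ ∈ ℝ with x₀ ≠ 1, let α > 1 and let T* satisfy 0 < T* < (α − 1)/(α(1 + α|x₀|)). Then there exists a continuously differentiable function x : [0,T*] → ℝ with x(0) = x₀ and ẋ(t) = x(t) − max_{s∈[0,t]} x²(s) for all t ∈ [0,T*]. -/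
/-!
For `x₀ ≤ 1` the solution `x₀ / (x₀ + (1 - x₀) e^{-t})` of the logistic equation `ẋ = x - x²`
has `|x|` nondecreasing, so the running maximum of `x²` is `x(t)²` and it solves the equation
with maxima until its denominator vanishes. For `x₀ > 1` the solution decreases from `x₀`;
while it stays in `[-x₀, x₀]` the running maximum is frozen at `x₀²`, so it is the solution
`x₀² + (x₀ - x₀²) eᵗ` of the linear equation `ẋ = x - x₀²`. In both cases the solution is
valid as long as `|x₀| eᵗ < 1 + |x₀|`, and this holds up to time `1 / (1 + |x₀|)`, which
exceeds `T` because `e^{-1/(1+b)} ≥ b / (1 + b)`.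
-/

open Real Set

def SolvesLogisticWithMaxima (x : ℝ → ℝ) (T : ℝ) : Prop :=
  ∀ t ∈ Icc (0 : ℝ) T,
    HasDerivWithinAt x (x t - sSup ((fun s => x s ^ 2) '' Icc 0 t)) (Icc 0 T) t

theorem SolvesLogisticWithMaxima.of_isGreatest {x m : ℝ → ℝ} {T : ℝ}
    (hderiv : ∀ t ∈ Icc (0 : ℝ) T, HasDerivAt x (x t - m t) t)
    (hmax : ∀ t ∈ Icc (0 : ℝ) T, IsGreatest ((fun s => x s ^ 2) '' Icc 0 t) (m t)) :
    SolvesLogisticWithMaxima x T := fun t ht => by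
  rw [(hmax t ht).csSup_eq]
  exact (hderiv t ht).hasDerivWithinAt

theorem div_le_one_div_one_add {α c : ℝ} (hα : 0 < α) (hc : 0 ≤ c) :
    (α - 1) / (α * (1 + α * c)) ≤ 1 / (1 + c) := by
  rw [div_le_div_iff₀ (by positivity) (by positivity)]
  nlinarith [mul_nonneg (mul_nonneg hα.le hα.le) hc, mul_nonneg hα.le hc]

theorem mul_exp_one_div_one_add_le {b : ℝ} (hb : 0 ≤ b) : b * exp (1 / (1 + b)) ≤ 1 + b := by
  have hexp : b / (1 + b) ≤ exp (-(1 / (1 + b))) := by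
    have : -(1 / (1 + b)) + 1 = b / (1 + b) := by field_simp; ring
    linarith [add_one_le_exp (-(1 / (1 + b)))]
  rwa [exp_neg, div_le_iff₀ (by positivity), ← div_eq_inv_mul, le_div_iff₀ (exp_pos _)] at hexp

theorem mul_exp_lt_one_add {b u : ℝ} (hb : 0 ≤ b) (hu : u < 1 / (1 + b)) :
    b * exp u < 1 + b := by
  rcases hb.eq_or_lt with rfl | hb
  · simp
  calc b * exp u < b * exp (1 / (1 + b)) := by gcongr
    _ ≤ 1 + b := mul_exp_one_div_one_add_le hb.le

noncomputable def logisticSolution (x₀ t : ℝ) : ℝ := x₀ / (x₀ + (1 - x₀) * exp (-t))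

theorem logisticSolution_zero (x₀ : ℝ) : logisticSolution x₀ 0 = x₀ := by
  simp [logisticSolution]

theorem hasDerivAt_logisticSolution {x₀ t : ℝ} (h : x₀ + (1 - x₀) * exp (-t) ≠ 0) :
    HasDerivAt (logisticSolution x₀) (logisticSolution x₀ t - logisticSolution x₀ t ^ 2) t := by
  have hden : HasDerivAt (fun u => x₀ + (1 - x₀) * exp (-u)) (-((1 - x₀) * exp (-t))) t := by
    simpa using (((hasDerivAt_neg t).exp).const_mul (1 - x₀)).const_add x₀
  refine ((hasDerivAt_const t x₀).div hden h).congr_deriv ?_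
  simp only [logisticSolution]
  field_simp
  ring

theorem logistic_denom_pos {x₀ u : ℝ} (hu : 0 ≤ u) (hbound : |x₀| * exp u < 1 + |x₀|) :
    0 < x₀ + (1 - x₀) * exp (-u) := by
  have hscaled : 0 < (x₀ + (1 - x₀) * exp (-u)) * exp u := by
    rw [add_mul, mul_assoc, ← exp_add, neg_add_cancel, exp_zero, mul_one]
    rcases le_or_gt 0 x₀ with h | h
    · nlinarith [one_le_exp hu]
    · rw [abs_of_neg h] at hbound
      linarith
  exact pos_of_mul_pos_left hscaled (exp_pos u).le

theorem monotoneOn_logisticSolution_sq {x₀ : ℝ} {s : Set ℝ} (hx₀ : x₀ ≤ 1)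
    (hpos : ∀ u ∈ s, 0 < x₀ + (1 - x₀) * exp (-u)) :
    MonotoneOn (fun t => logisticSolution x₀ t ^ 2) s := by
  intro a ha b hb hab
  have hden : x₀ + (1 - x₀) * exp (-b) ≤ x₀ + (1 - x₀) * exp (-a) := by gcongr
  have hb_pos := hpos b hb
  simp only [logisticSolution, div_pow]
  gcongr

theorem solvesLogisticWithMaxima_logisticSolution {x₀ T : ℝ} (hx₀ : x₀ ≤ 1)
    (hbound : ∀ u ∈ Icc (0 : ℝ) T, |x₀| * exp u < 1 + |x₀|) :
    SolvesLogisticWithMaxima (logisticSolution x₀) T := by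
  have hpos : ∀ u ∈ Icc (0 : ℝ) T, 0 < x₀ + (1 - x₀) * exp (-u) :=
    fun u hu => logistic_denom_pos hu.1 (hbound u hu)
  refine .of_isGreatest (fun t ht => hasDerivAt_logisticSolution (hpos t ht).ne') fun t ht => ?_
  have hmono := monotoneOn_logisticSolution_sq hx₀ hpos
  exact (hmono.mono (Icc_subset_Icc_right ht.2)).map_isGreatest (isGreatest_Icc ht.1)

noncomputable def frozenMaxSolution (x₀ t : ℝ) : ℝ := x₀ ^ 2 + (x₀ - x₀ ^ 2) * exp t

theorem frozenMaxSolution_zero (x₀ : ℝ) : frozenMaxSolution x₀ 0 = x₀ := by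
  simp [frozenMaxSolution]

theorem hasDerivAt_frozenMaxSolution (x₀ t : ℝ) :
    HasDerivAt (frozenMaxSolution x₀) (frozenMaxSolution x₀ t - x₀ ^ 2) t := by
  refine (((hasDerivAt_exp t).const_mul (x₀ - x₀ ^ 2)).const_add (x₀ ^ 2)).congr_deriv ?_
  simp only [frozenMaxSolution]
  ring

theorem frozenMaxSolution_sq_le {x₀ t : ℝ} (hx₀ : 1 ≤ x₀) (ht : 0 ≤ t)
    (hbound : (x₀ - 1) * exp t ≤ x₀ + 1) :
    frozenMaxSolution x₀ t ^ 2 ≤ x₀ ^ 2 := by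
  have hx₀pos : 0 ≤ x₀ := by linarith
  have hupper : frozenMaxSolution x₀ t ≤ x₀ := by
    have : 0 ≤ (x₀ ^ 2 - x₀) * (exp t - 1) :=
      mul_nonneg (by nlinarith) (by linarith [one_le_exp ht])
    simp only [frozenMaxSolution]
    linarith
  have hlower : -x₀ ≤ frozenMaxSolution x₀ t := by
    have := mul_le_mul_of_nonneg_left hbound hx₀pos
    simp only [frozenMaxSolution]
    linarith
  exact sq_le_sq' hlower hupper

theorem solvesLogisticWithMaxima_frozenMaxSolution {x₀ T : ℝ} (hx₀ : 1 ≤ x₀)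
    (hbound : ∀ u ∈ Icc (0 : ℝ) T, |x₀| * exp u < 1 + |x₀|) :
    SolvesLogisticWithMaxima (frozenMaxSolution x₀) T := by
  refine .of_isGreatest (fun t _ => hasDerivAt_frozenMaxSolution x₀ t) fun t ht => ?_
  refine ⟨⟨0, ⟨le_rfl, ht.1⟩, by simp [frozenMaxSolution_zero]⟩, ?_⟩
  rintro _ ⟨s, hs, rfl⟩
  have hlt := hbound s ⟨hs.1, hs.2.trans ht.2⟩
  rw [abs_of_nonneg (by linarith)] at hlt
  exact frozenMaxSolution_sq_le hx₀ hs.1 (by linarith [exp_pos s])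

theorem exists_solution_logistic_with_maxima_general (x₀ : ℝ) (α : ℝ) (hα : 1 < α)
    (T : ℝ) (hT' : T < (α - 1) / (α * (1 + α * |x₀|))) :
    ∃ x : ℝ → ℝ, x 0 = x₀ ∧ ∀ t ∈ Set.Icc (0:ℝ) T, HasDerivWithinAt x
      (x t - sSup ((fun s => (x s) ^ 2) '' Set.Icc 0 t)) (Set.Icc 0 T) t := by
  have hbound : ∀ u ∈ Icc (0 : ℝ) T, |x₀| * exp u < 1 + |x₀| := fun u hu =>
    mul_exp_lt_one_add (abs_nonneg x₀) <| calc
      u ≤ T := hu.2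
      _ < (α - 1) / (α * (1 + α * |x₀|)) := hT'
      _ ≤ 1 / (1 + |x₀|) := div_le_one_div_one_add (by linarith) (abs_nonneg x₀)
  rcases le_or_gt x₀ 1 with hx₀ | hx₀
  · exact ⟨_, logisticSolution_zero x₀, solvesLogisticWithMaxima_logisticSolution hx₀ hbound⟩
  · exact ⟨_, frozenMaxSolution_zero x₀, solvesLogisticWithMaxima_frozenMaxSolution hx₀.le hbound⟩

/-- Local existence for the modified logistic equation with maxima
`ẋ(t) = x(t) − max_{s∈[0,t]} x²(s)`, `x(0) = x₀ ≠ 1`, on `[0,T*]` with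
`0 < T* < (α−1)/(α(1+α|x₀|))` for some `α > 1`. -/
theorem exists_solution_logistic_with_maxima (x₀ : ℝ) (hx₀ : x₀ ≠ 1) (α : ℝ) (hα : 1 < α)
    (T : ℝ) (hT : 0 < T) (hT' : T < (α - 1) / (α * (1 + α * |x₀|))) :
    ∃ x : ℝ → ℝ, x 0 = x₀ ∧ ∀ t ∈ Set.Icc (0:ℝ) T, HasDerivWithinAt x
      (x t - sSup ((fun s => (x s) ^ 2) '' Set.Icc 0 t)) (Set.Icc 0 T) t :=
  exists_solution_logistic_with_maxima_general x₀ α hα T hT'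
end

section
/- Let x₀ ∈ ℝ, α > 1, and 0 < T* < (α − 1)/(α(1 + α|x₀|)). Define recursively the continuous functions g₀ ≡ 1 on [0,T*] and g_{n+1}(t) = 1 + ∫₀ᵗ g_n(s) ds − x₀ ∫₀ᵗ max_{η∈[0,s]} (g_n(η))² ds. Then for every n ∈ ℕ and every t ∈ [0,T*] one has |g_n(t)| ≤ α. -/
/-- Uniform bound `|g_n(t)| ≤ α` for the Picard iterates
`g₀ ≡ 1`, `g_{n+1}(t) = 1 + ∫₀ᵗ g_n − x₀ ∫₀ᵗ max_{[0,s]} g_n²` on `[0,T*]`,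
when `α > 1` and `0 < T* < (α−1)/(α(1+α|x₀|))`. -/
theorem picard_iterates_bounded (x₀ α T : ℝ) (hα : 1 < α)
    (hT : 0 < T) (hT' : T < (α - 1) / (α * (1 + α * |x₀|)))
    (g : ℕ → ℝ → ℝ)
    (hgc : ∀ n, ContinuousOn (g n) (Set.Icc 0 T))
    (hg0 : ∀ t ∈ Set.Icc (0:ℝ) T, g 0 t = 1)
    (hgrec : ∀ n, ∀ t ∈ Set.Icc (0:ℝ) T, g (n + 1) t =
      1 + (∫ s in (0:ℝ)..t, g n s)
        - x₀ * ∫ s in (0:ℝ)..t, sSup ((fun η => (g n η) ^ 2) '' Set.Icc 0 s)) :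
    ∀ n, ∀ t ∈ Set.Icc (0:ℝ) T, |g n t| ≤ α := by
  intro n
  induction n with
  | zero =>
    intro t ht
    rw [hg0 t ht, abs_one]
    linarith
  | succ n ih =>
    intro t ht
    obtain ⟨ht0, htT⟩ := ht
    have hα0 : (0:ℝ) < α := by linarith
    have hx0 : (0:ℝ) ≤ |x₀| := abs_nonneg _
    have hden : 0 < α * (1 + α * |x₀|) := by positivity
    have hTα : T * (α * (1 + α * |x₀|)) < α - 1 := (lt_div_iff₀ hden).mp hT'
    -- bound first integral
    have hA : |∫ s in (0:ℝ)..t, g n s| ≤ α * |t - 0| := by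
      rw [← Real.norm_eq_abs]
      apply intervalIntegral.norm_integral_le_of_norm_le_const
      intro s hs
      rw [Set.uIoc_of_le ht0] at hs
      rw [Real.norm_eq_abs]
      exact ih s ⟨le_of_lt hs.1, le_trans hs.2 htT⟩
    -- bound second integral
    have hB : |∫ s in (0:ℝ)..t, sSup ((fun η => (g n η) ^ 2) '' Set.Icc 0 s)|
        ≤ α ^ 2 * |t - 0| := by
      rw [← Real.norm_eq_abs]
      apply intervalIntegral.norm_integral_le_of_norm_le_const
      intro s hs
      rw [Set.uIoc_of_le ht0] at hs
      have hs0 : (0:ℝ) ≤ s := le_of_lt hs.1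
      have hsT : s ≤ T := le_trans hs.2 htT
      have hne : ((fun η => (g n η) ^ 2) '' Set.Icc 0 s).Nonempty :=
        (Set.nonempty_Icc.2 hs0).image _
      have hub : ∀ y ∈ (fun η => (g n η) ^ 2) '' Set.Icc 0 s, y ≤ α ^ 2 := by
        rintro y ⟨η, hη, rfl⟩
        have := ih η ⟨hη.1, le_trans hη.2 hsT⟩
        calc (g n η) ^ 2 = |g n η| ^ 2 := (sq_abs _).symm
          _ ≤ α ^ 2 := by nlinarith [abs_nonneg (g n η)]
      have hle : sSup ((fun η => (g n η) ^ 2) '' Set.Icc 0 s) ≤ α ^ 2 :=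
        Real.sSup_le hub (by positivity)
      have hge : 0 ≤ sSup ((fun η => (g n η) ^ 2) '' Set.Icc 0 s) := by
        have hmem : (g n 0) ^ 2 ∈ (fun η => (g n η) ^ 2) '' Set.Icc 0 s :=
          ⟨0, ⟨le_refl 0, hs0⟩, rfl⟩
        have hbdd : BddAbove ((fun η => (g n η) ^ 2) '' Set.Icc 0 s) := ⟨α ^ 2, hub⟩
        exact le_trans (sq_nonneg _) (le_csSup hbdd hmem)
      rw [Real.norm_eq_abs, abs_of_nonneg hge]
      exact hle
    rw [hgrec n t ⟨ht0, htT⟩]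
    have habs : |1 + (∫ s in (0:ℝ)..t, g n s)
        - x₀ * ∫ s in (0:ℝ)..t, sSup ((fun η => (g n η) ^ 2) '' Set.Icc 0 s)|
        ≤ 1 + |∫ s in (0:ℝ)..t, g n s|
          + |x₀| * |∫ s in (0:ℝ)..t, sSup ((fun η => (g n η) ^ 2) '' Set.Icc 0 s)| := by
      calc _ ≤ |1 + (∫ s in (0:ℝ)..t, g n s)|
          + |x₀ * ∫ s in (0:ℝ)..t, sSup ((fun η => (g n η) ^ 2) '' Set.Icc 0 s)| :=
            abs_sub _ _
        _ ≤ _ := by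
            rw [abs_mul]
            have := abs_add_le (1:ℝ) (∫ s in (0:ℝ)..t, g n s)
            simp only [abs_one] at this
            linarith
    have htabs : |t - 0| = t := by rw [sub_zero, abs_of_nonneg ht0]
    rw [htabs] at hA hB
    nlinarith [mul_le_mul_of_nonneg_left hB hx0, sq_nonneg α,
      mul_le_mul_of_nonneg_right (mul_le_mul_of_nonneg_left (le_refl (α*(1+α*|x₀|))) (le_of_lt hT)) hx0,
      mul_nonneg hx0 (sq_nonneg α), htT, hTα, mul_le_mul_of_nonneg_left htT (le_of_lt hden)]
end

section
/- Let x₀ > 0 and y₀ > 0 with x₀ ≠ y₀. Then for every T > 0 there exists a pair of continuously differentiable functions (x,y) : [0,T] → ℝ² such that x(0) = x₀, y(0) = y₀, and for all t ∈ [0,T]: ẋ(t) = x(t) − max_{s∈[0,t]} y(s) and ẏ(t) = y(t) − max_{s∈[0,t]} x(s). -/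
/-!
If `y₀ ≤ x₀`, the solution keeps `x` increasing and `y` decreasing, so the running maxima are
`max_{[0,t]} y = y₀` and `max_{[0,t]} x = x t`. The system then decouples into the linear equations
`ẋ = x - y₀`, `ẏ = y - x`, solved by `x t = y₀ + a eᵗ`, `y t = y₀ - a t eᵗ` with `a = x₀ - y₀`.
The case `x₀ ≤ y₀` follows by exchanging the roles of `x` and `y`.
-/

open Real Set

def SolvesSystemWithMaxima (T : ℝ) (x y : ℝ → ℝ) : Prop :=
  ∀ t ∈ Icc (0 : ℝ) T,
    HasDerivWithinAt x (x t - sSup (y '' Icc 0 t)) (Icc 0 T) t ∧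
    HasDerivWithinAt y (y t - sSup (x '' Icc 0 t)) (Icc 0 T) t

theorem SolvesSystemWithMaxima.swap {T : ℝ} {x y : ℝ → ℝ} (h : SolvesSystemWithMaxima T x y) :
    SolvesSystemWithMaxima T y x :=
  fun t ht => (h t ht).symm

section ExplicitSolution

variable (c : ℝ) {a : ℝ}

theorem monotone_const_add_mul_exp (ha : 0 ≤ a) : Monotone fun t => c + a * exp t :=
  fun _ _ hst => by dsimp only; gcongr

theorem antitoneOn_const_sub_mul_mul_exp (ha : 0 ≤ a) :
    AntitoneOn (fun t => c - a * (t * exp t)) (Ici 0) :=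
  fun s (hs : 0 ≤ s) _ _ hst => by dsimp only; gcongr

theorem solvesSystemWithMaxima_exp (ha : 0 ≤ a) (T : ℝ) :
    SolvesSystemWithMaxima T (fun t => c + a * exp t) (fun t => c - a * (t * exp t)) := by
  rintro t ⟨ht, -⟩
  have hsup_y : sSup ((fun s => c - a * (s * exp s)) '' Icc 0 t) = c := by
    have := ((antitoneOn_const_sub_mul_mul_exp c ha).mono Icc_subset_Ici_self).map_isLeast
      (isLeast_Icc ht)
    simpa using this.csSup_eq
  have hsup_x : sSup ((fun s => c + a * exp s) '' Icc 0 t) = c + a * exp t :=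
    ((monotone_const_add_mul_exp c ha).monotoneOn _).map_isGreatest (isGreatest_Icc ht)
      |>.csSup_eq
  rw [hsup_y, hsup_x]
  have hx : HasDerivAt (fun s => c + a * exp s) (a * exp t) t :=
    ((hasDerivAt_exp t).const_mul a).const_add c
  have hy : HasDerivAt (fun s => c - a * (s * exp s)) (-(a * (1 * exp t + t * exp t))) t :=
    (((hasDerivAt_id' t).mul (hasDerivAt_exp t)).const_mul a).const_sub c
  exact ⟨hx.hasDerivWithinAt.congr_deriv (by ring), hy.hasDerivWithinAt.congr_deriv (by ring)⟩

end ExplicitSolution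

theorem exists_solution_coupled_system_with_maxima_general (x₀ y₀ : ℝ) (T : ℝ) :
    ∃ x y : ℝ → ℝ, x 0 = x₀ ∧ y 0 = y₀ ∧
      ∀ t ∈ Set.Icc (0:ℝ) T,
        HasDerivWithinAt x (x t - sSup (y '' Set.Icc 0 t)) (Set.Icc 0 T) t ∧
        HasDerivWithinAt y (y t - sSup (x '' Set.Icc 0 t)) (Set.Icc 0 T) t := by
  wlog h : y₀ ≤ x₀ generalizing x₀ y₀
  · obtain ⟨x, y, hx, hy, hsol⟩ := this y₀ x₀ (le_of_not_ge h)
    exact ⟨y, x, hy, hx, SolvesSystemWithMaxima.swap hsol⟩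
  exact ⟨_, _, by simp, by simp, solvesSystemWithMaxima_exp y₀ (sub_nonneg.2 h) T⟩

/-- Global existence on `[0,T]` for the coupled system with maxima
`ẋ = x − max_{[0,t]} y`, `ẏ = y − max_{[0,t]} x`, with `x₀, y₀ > 0` and `x₀ ≠ y₀`. -/
theorem exists_solution_coupled_system_with_maxima (x₀ y₀ : ℝ)
    (hx₀ : 0 < x₀) (hy₀ : 0 < y₀) (hne : x₀ ≠ y₀) (T : ℝ) (hT : 0 < T) :
    ∃ x y : ℝ → ℝ, x 0 = x₀ ∧ y 0 = y₀ ∧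
      ∀ t ∈ Set.Icc (0:ℝ) T,
        HasDerivWithinAt x (x t - sSup (y '' Set.Icc 0 t)) (Set.Icc 0 T) t ∧
        HasDerivWithinAt y (y t - sSup (x '' Set.Icc 0 t)) (Set.Icc 0 T) t :=
  exists_solution_coupled_system_with_maxima_general x₀ y₀ T
end

section
/- Let 0 < y₀ < x₀. Define sequences of continuous functions on [0,∞) by x⁰(t) = x₀, y⁰(t) = y₀, and x^{n+1}(t) = x₀ + ∫₀ᵗ (xⁿ(s) − y₀) ds, y^{n+1}(t) = y₀ + ∫₀ᵗ (yⁿ(s) − xⁿ(s)) ds. Then for every n ∈ ℕ and every t ≥ 0, xⁿ(t) ≥ y₀ and yⁿ(t) ≤ xⁿ(t). -/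
/-- For the Picard iterates `x⁰ ≡ x₀`, `y⁰ ≡ y₀`,
`x^{n+1}(t) = x₀ + ∫₀ᵗ (xⁿ(s) − y₀) ds`, `y^{n+1}(t) = y₀ + ∫₀ᵗ (yⁿ(s) − xⁿ(s)) ds`,
with `0 < y₀ < x₀`, one has `xⁿ(t) ≥ y₀` and `yⁿ(t) ≤ xⁿ(t)` for all `n` and `t ≥ 0`. -/
theorem picard_iterates_order (x₀ y₀ : ℝ) (hy₀ : 0 < y₀) (hyx : y₀ < x₀)
    (x y : ℕ → ℝ → ℝ)
    (hxc : ∀ n, ContinuousOn (x n) (Set.Ici 0)) (hyc : ∀ n, ContinuousOn (y n) (Set.Ici 0))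
    (hx0 : ∀ t ∈ Set.Ici (0:ℝ), x 0 t = x₀) (hy0 : ∀ t ∈ Set.Ici (0:ℝ), y 0 t = y₀)
    (hxrec : ∀ n, ∀ t ∈ Set.Ici (0:ℝ), x (n + 1) t = x₀ + ∫ s in (0:ℝ)..t, (x n s - y₀))
    (hyrec : ∀ n, ∀ t ∈ Set.Ici (0:ℝ), y (n + 1) t = y₀ + ∫ s in (0:ℝ)..t, (y n s - x n s)) :
    ∀ n, ∀ t ∈ Set.Ici (0:ℝ), y₀ ≤ x n t ∧ y n t ≤ x n t := by
  intro n
  induction n with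
  | zero =>
    intro t ht
    rw [hx0 t ht, hy0 t ht]
    exact ⟨hyx.le, hyx.le⟩
  | succ n ih =>
    intro t ht
    have ht' : (0:ℝ) ≤ t := ht
    have hInt1 : (0:ℝ) ≤ ∫ s in (0:ℝ)..t, (x n s - y₀) := by
      apply intervalIntegral.integral_nonneg ht'
      intro u hu
      have := (ih u hu.1).1
      linarith
    have hInt2 : (∫ s in (0:ℝ)..t, (y n s - x n s)) ≤ 0 := by
      have heq : (∫ s in (0:ℝ)..t, (y n s - x n s))
          = -∫ s in (0:ℝ)..t, (x n s - y n s) := by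
        rw [← intervalIntegral.integral_neg]
        congr 1 with s
        ring
      rw [heq, neg_nonpos]
      apply intervalIntegral.integral_nonneg ht'
      intro u hu
      have := (ih u hu.1).2
      linarith
    rw [hxrec n t ht, hyrec n t ht]
    constructor
    · linarith
    · linarith
end

section
/- Let 0 < y₀ < x₀. Define sequences of continuous functions on [0,∞) by x⁰(t) = x₀, y⁰(t) = y₀, and x^{n+1}(t) = x₀ + ∫₀ᵗ (xⁿ(s) − y₀) ds, y^{n+1}(t) = y₀ + ∫₀ᵗ (yⁿ(s) − xⁿ(s)) ds. Then for every n ∈ ℕ the function xⁿ is nondecreasing and the function yⁿ is nonincreasing on [0,∞); consequently, for every s ≥ 0, max_{τ∈[0,s]} xⁿ(τ) = xⁿ(s) and max_{τ∈[0,s]} yⁿ(τ) = y₀. -/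
/-- For the Picard iterates `x⁰ ≡ x₀`, `y⁰ ≡ y₀`,
`x^{n+1}(t) = x₀ + ∫₀ᵗ (xⁿ(s) − y₀) ds`, `y^{n+1}(t) = y₀ + ∫₀ᵗ (yⁿ(s) − xⁿ(s)) ds`,
with `0 < y₀ < x₀`: each `xⁿ` is nondecreasing and each `yⁿ` is nonincreasing on `[0,∞)`;
consequently `max_{[0,s]} xⁿ = xⁿ(s)` and `max_{[0,s]} yⁿ = y₀` for all `s ≥ 0`. -/
theorem picard_iterates_monotone (x₀ y₀ : ℝ) (hy₀ : 0 < y₀) (hyx : y₀ < x₀)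
    (x y : ℕ → ℝ → ℝ)
    (hxc : ∀ n, ContinuousOn (x n) (Set.Ici 0)) (hyc : ∀ n, ContinuousOn (y n) (Set.Ici 0))
    (hx0 : ∀ t ∈ Set.Ici (0:ℝ), x 0 t = x₀) (hy0 : ∀ t ∈ Set.Ici (0:ℝ), y 0 t = y₀)
    (hxrec : ∀ n, ∀ t ∈ Set.Ici (0:ℝ), x (n + 1) t = x₀ + ∫ s in (0:ℝ)..t, (x n s - y₀))
    (hyrec : ∀ n, ∀ t ∈ Set.Ici (0:ℝ), y (n + 1) t = y₀ + ∫ s in (0:ℝ)..t, (y n s - x n s)) :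
    ∀ n, MonotoneOn (x n) (Set.Ici 0) ∧ AntitoneOn (y n) (Set.Ici 0) ∧
      ∀ s ∈ Set.Ici (0:ℝ), sSup (x n '' Set.Icc 0 s) = x n s ∧
        sSup (y n '' Set.Icc 0 s) = y₀ := by
  -- strengthened induction
  have key : ∀ n, MonotoneOn (x n) (Set.Ici 0) ∧ AntitoneOn (y n) (Set.Ici 0) ∧
      (∀ t ∈ Set.Ici (0:ℝ), x₀ ≤ x n t) ∧ (∀ t ∈ Set.Ici (0:ℝ), y n t ≤ y₀) ∧
      y n 0 = y₀ := by
    intro n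
    induction n with
    | zero =>
      refine ⟨?_, ?_, ?_, ?_, hy0 0 Set.self_mem_Ici⟩
      · intro a ha b hb _; rw [hx0 a ha, hx0 b hb]
      · intro a ha b hb _; rw [hy0 a ha, hy0 b hb]
      · intro t ht; rw [hx0 t ht]
      · intro t ht; rw [hy0 t ht]
    | succ n ih =>
      obtain ⟨hxm, hym, hxb, hyb, hy00⟩ := ih
      have huIcc : ∀ a b : ℝ, a ∈ Set.Ici (0:ℝ) → b ∈ Set.Ici (0:ℝ) →
          Set.uIcc a b ⊆ Set.Ici (0:ℝ) := by
        intro a b ha hb t ht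
        exact le_trans (le_min ha hb) ht.1
      have hxint : ∀ a b : ℝ, a ∈ Set.Ici (0:ℝ) → b ∈ Set.Ici (0:ℝ) →
          IntervalIntegrable (fun s => x n s - y₀) MeasureTheory.volume a b := by
        intro a b ha hb
        exact (((hxc n).mono (huIcc a b ha hb)).sub continuousOn_const).intervalIntegrable
      have hyint : ∀ a b : ℝ, a ∈ Set.Ici (0:ℝ) → b ∈ Set.Ici (0:ℝ) →
          IntervalIntegrable (fun s => y n s - x n s) MeasureTheory.volume a b := by
        intro a b ha hb
        exact (((hyc n).mono (huIcc a b ha hb)).sub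
          ((hxc n).mono (huIcc a b ha hb))).intervalIntegrable
      have hxmono : MonotoneOn (x (n+1)) (Set.Ici 0) := by
        intro a ha b hb hab
        rw [hxrec n a ha, hxrec n b hb]
        have hsplit : (∫ s in (0:ℝ)..b, (x n s - y₀)) =
            (∫ s in (0:ℝ)..a, (x n s - y₀)) + ∫ s in a..b, (x n s - y₀) :=
          (intervalIntegral.integral_add_adjacent_intervals
            (hxint 0 a Set.self_mem_Ici ha) (hxint a b ha hb)).symm
        have hnn : (0:ℝ) ≤ ∫ s in a..b, (x n s - y₀) := by
          apply intervalIntegral.integral_nonneg hab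
          intro u hu
          have hu0 : u ∈ Set.Ici (0:ℝ) := le_trans ha hu.1
          have := hxb u hu0
          linarith [hyx]
        linarith [hsplit, hnn]
      have hyanti : AntitoneOn (y (n+1)) (Set.Ici 0) := by
        intro a ha b hb hab
        rw [hyrec n a ha, hyrec n b hb]
        have hsplit : (∫ s in (0:ℝ)..b, (y n s - x n s)) =
            (∫ s in (0:ℝ)..a, (y n s - x n s)) + ∫ s in a..b, (y n s - x n s) :=
          (intervalIntegral.integral_add_adjacent_intervals
            (hyint 0 a Set.self_mem_Ici ha) (hyint a b ha hb)).symm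
        have hnp : (∫ s in a..b, (y n s - x n s)) ≤ 0 := by
          have heq : (∫ s in a..b, (y n s - x n s)) = -∫ s in a..b, (x n s - y n s) := by
            rw [← intervalIntegral.integral_neg]; simp [neg_sub]
          rw [heq, neg_nonpos]
          apply intervalIntegral.integral_nonneg hab
          intro u hu
          have hu0 : u ∈ Set.Ici (0:ℝ) := le_trans ha hu.1
          have h1 := hyb u hu0
          have h2 := hxb u hu0
          linarith
        linarith [hsplit, hnp]
      refine ⟨hxmono, hyanti, ?_, ?_, ?_⟩
      · intro t ht
        rw [hxrec n t ht]
        have : (0:ℝ) ≤ ∫ s in (0:ℝ)..t, (x n s - y₀) := by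
          apply intervalIntegral.integral_nonneg ht
          intro u hu
          have := hxb u hu.1
          linarith
        linarith
      · intro t ht
        rw [hyrec n t ht]
        have : (∫ s in (0:ℝ)..t, (y n s - x n s)) ≤ 0 := by
          have heq : (∫ s in (0:ℝ)..t, (y n s - x n s)) = -∫ s in (0:ℝ)..t, (x n s - y n s) := by
            rw [← intervalIntegral.integral_neg]; simp [neg_sub]
          rw [heq, neg_nonpos]
          apply intervalIntegral.integral_nonneg ht
          intro u hu
          have h1 := hyb u hu.1
          have h2 := hxb u hu.1
          linarith
        linarith
      · rw [hyrec n 0 Set.self_mem_Ici, intervalIntegral.integral_same, add_zero]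
  intro n
  obtain ⟨hxm, hym, hxb, hyb, hy00⟩ := key n
  refine ⟨hxm, hym, ?_⟩
  intro s hs
  have hsub : Set.Icc (0:ℝ) s ⊆ Set.Ici 0 := fun t ht => ht.1
  constructor
  · apply IsGreatest.csSup_eq
    constructor
    · exact ⟨s, ⟨le_rfl.trans hs, le_rfl⟩, rfl⟩
    · rintro _ ⟨t, ht, rfl⟩
      exact hxm (hsub ht) hs ht.2
  · apply IsGreatest.csSup_eq
    constructor
    · exact ⟨0, ⟨le_rfl, hs⟩, hy00⟩
    · rintro _ ⟨t, ht, rfl⟩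
      exact hyb t (hsub ht)
end

section
/- Let x₀ > 0, y₀ > 0, and let T > 0, c₀ > 0 satisfy |x₀| + |x₀ − y₀²| T ≤ c₀, |y₀| + |y₀ − x₀²| T ≤ c₀, |x₀| + c₀ T + c₀² T ≤ c₀, and |y₀| + c₀ T + c₀² T ≤ c₀. Then there exists a pair of continuously differentiable functions (x,y) : [0,T] → ℝ² with x(0) = x₀, y(0) = y₀, and for all t ∈ [0,T]: ẋ(t) = x(t) − max_{s∈[0,t]} y²(s) and ẏ(t) = y(t) − max_{s∈[0,t]} x²(s). -/
/-!
The solution is a fixed point of the integral operator `Φ F = z₀ + ∫₀ᵗ f F` on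
`C([0,T], ℝ²)`, where `f (x, y) t = (x t - max_{[0,t]} y², y t - max_{[0,t]} x²)`.
Since `|a² - b²| ≤ 2R |a - b|` for `|a|, |b| ≤ R`, on the ball of radius `R` the field `f` at time
`t` is `(1 + 2R)`-Lipschitz for the sup distance over `[0,t]`. As for ordinary Picard iteration
this gives `dist (Φⁿ F) (Φⁿ G) ≤ ((1 + 2R) T)ⁿ / n! · dist F G`, so some iterate of `Φ` is a
contraction. Since `‖f F‖ ≤ R + R²`, the conditions on `c₀` say that `Φ` maps the ball of radius
`R = c₀` into itself.
-/

open Set Function intervalIntegral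
open scoped Nat

theorem exists_isFixedPt_of_dist_iterate_le {α : Type*} [MetricSpace α] {f : α → α} {s : Set α}
    (hs : IsComplete s) (hne : s.Nonempty) (hsf : MapsTo f s s) (C : ℝ)
    (h : ∀ n, ∀ x ∈ s, ∀ y ∈ s, dist (f^[n] x) (f^[n] y) ≤ C ^ n / n ! * dist x y) :
    ∃ x ∈ s, IsFixedPt f x := by
  have := hs.completeSpace_coe
  have := hne.to_subtype
  obtain ⟨N, hN⟩ : ∃ N : ℕ, C ^ N / N ! < 1 :=
    ((FloorSemiring.tendsto_pow_div_factorial_atTop C).eventually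
      (gt_mem_nhds one_pos)).exists
  have hcontr : ContractingWith (C ^ N / N !).toNNReal (hsf.restrict f s s)^[N] := by
    refine ⟨Real.toNNReal_lt_one.2 hN, LipschitzWith.of_dist_le_mul fun x y => ?_⟩
    rw [MapsTo.iterate_restrict, Subtype.dist_eq, Subtype.dist_eq]
    exact (h N x x.2 y y.2).trans (by gcongr; exact Real.le_coe_toNNReal _)
  exact ⟨_, Subtype.coe_prop _, Subtype.ext_iff.1 hcontr.isFixedPt_fixedPoint_iterate⟩

theorem abs_sq_sub_sq_le_of_abs_le {a b R : ℝ} (ha : |a| ≤ R) (hb : |b| ≤ R) :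
    |a ^ 2 - b ^ 2| ≤ 2 * R * |a - b| := by
  rw [sq_sub_sq, abs_mul]
  gcongr
  linarith [abs_add_le a b]

noncomputable def runningSup (g : ℝ → ℝ) (t : ℝ) : ℝ := sSup (g '' Icc 0 t)

section runningSup

variable {g h : ℝ → ℝ} {t : ℝ}

theorem runningSup_eq_sSup_image_unitInterval (g : ℝ → ℝ) (ht : 0 ≤ t) :
    runningSup g t = sSup ((fun r => g (r * t)) '' Icc 0 1) := by
  rw [runningSup, ← image_image g (· * t), image_mul_right_Icc zero_le_one ht, zero_mul,
    one_mul]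

theorem continuousOn_runningSup (hg : Continuous g) : ContinuousOn (runningSup g) (Ici 0) :=
  (isCompact_Icc.continuous_sSup (by fun_prop)).continuousOn.congr fun _ ht =>
    runningSup_eq_sSup_image_unitInterval g ht

theorem runningSup_le_runningSup_add (hh : BddAbove (h '' Icc 0 t)) (ht : 0 ≤ t) {d : ℝ}
    (hd : ∀ s ∈ Icc 0 t, g s ≤ h s + d) : runningSup g t ≤ runningSup h t + d :=
  csSup_le ((nonempty_Icc.2 ht).image g) <| forall_mem_image.2 fun s hs =>
    (hd s hs).trans (add_le_add_left (le_csSup hh (mem_image_of_mem h hs)) d)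

theorem abs_runningSup_sub_runningSup_le (hg : BddAbove (g '' Icc 0 t))
    (hh : BddAbove (h '' Icc 0 t)) (ht : 0 ≤ t) {d : ℝ} (hd : ∀ s ∈ Icc 0 t, |g s - h s| ≤ d) :
    |runningSup g t - runningSup h t| ≤ d := by
  have hgh := runningSup_le_runningSup_add (g := g) hh ht (d := d) fun s hs => by
    linarith [(abs_le.1 (hd s hs)).2]
  have hhg := runningSup_le_runningSup_add (g := h) hg ht (d := d) fun s hs => by
    linarith [(abs_le.1 (hd s hs)).1]
  exact abs_sub_le_iff.2 ⟨by linarith, by linarith⟩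

variable {R : ℝ}

theorem sq_mem_upperBounds_image_sq (hg : ∀ s ∈ Icc 0 t, |g s| ≤ R) :
    R ^ 2 ∈ upperBounds ((fun s => g s ^ 2) '' Icc 0 t) :=
  forall_mem_image.2 fun s hs => sq_le_sq.2 ((hg s hs).trans (le_abs_self R))

theorem abs_runningSup_sq_le (hg : ∀ s ∈ Icc 0 t, |g s| ≤ R) :
    |runningSup (fun s => g s ^ 2) t| ≤ R ^ 2 := by
  rw [runningSup, abs_of_nonneg (Real.sSup_nonneg (forall_mem_image.2 fun s _ => sq_nonneg _))]
  exact Real.sSup_le (sq_mem_upperBounds_image_sq hg) (sq_nonneg R)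

theorem abs_runningSup_sq_sub_runningSup_sq_le (ht : 0 ≤ t) (hg : ∀ s ∈ Icc 0 t, |g s| ≤ R)
    (hh : ∀ s ∈ Icc 0 t, |h s| ≤ R) {d : ℝ} (hd : ∀ s ∈ Icc 0 t, |g s - h s| ≤ d) :
    |runningSup (fun s => g s ^ 2) t - runningSup (fun s => h s ^ 2) t| ≤ 2 * R * d := by
  have hR : 0 ≤ R := (abs_nonneg _).trans (hg 0 ⟨le_rfl, ht⟩)
  refine abs_runningSup_sub_runningSup_le ⟨_, sq_mem_upperBounds_image_sq hg⟩
    ⟨_, sq_mem_upperBounds_image_sq hh⟩ ht fun s hs => ?_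
  exact (abs_sq_sub_sq_le_of_abs_le (hg s hs) (hh s hs)).trans (by gcongr; exact hd s hs)

end runningSup

theorem integral_mul_pow_div_factorial (L D t : ℝ) (n : ℕ) :
    ∫ s in 0..t, L * ((L * s) ^ n / n ! * D) = (L * t) ^ (n + 1) / (n + 1)! * D := by
  have hpoly : (fun s => L * ((L * s) ^ n / n ! * D)) =
      fun s => L ^ (n + 1) / n ! * D * s ^ n := by
    funext s
    ring
  rw [hpoly, intervalIntegral.integral_const_mul, integral_pow, Nat.factorial_succ]
  push_cast
  field_simp
  ring

theorem hasDerivWithinAt_integral_of_continuousOn {E : Type*} [NormedAddCommGroup E]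
    [NormedSpace ℝ E] [CompleteSpace E] {f : ℝ → E} {a b t : ℝ} (hf : ContinuousOn f (Icc a b))
    (ht : t ∈ Icc a b) : HasDerivWithinAt (fun u => ∫ s in a..u, f s) (f t) (Icc a b) t := by
  have : Fact (t ∈ Icc a b) := ⟨ht⟩
  exact integral_hasDerivWithinAt_right
    (hf.mono (uIcc_subset_Icc (left_mem_Icc.2 (ht.1.trans ht.2)) ht)).intervalIntegrable
    (hf.stronglyMeasurableAtFilter_nhdsWithin measurableSet_Icc t) (hf t ht)

namespace CoupledMaxSystem

noncomputable def field (u : ℝ → ℝ × ℝ) (t : ℝ) : ℝ × ℝ :=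
  u t - (runningSup (fun s => (u s).2 ^ 2) t, runningSup (fun s => (u s).1 ^ 2) t)

section field

variable {u v : ℝ → ℝ × ℝ} {t R : ℝ}

theorem continuousOn_field (hu : Continuous u) : ContinuousOn (field u) (Ici 0) :=
  hu.continuousOn.sub <| (continuousOn_runningSup (by fun_prop)).prodMk
    (continuousOn_runningSup (by fun_prop))

theorem norm_field_le (ht : 0 ≤ t) (hu : ∀ s ∈ Icc 0 t, ‖u s‖ ≤ R) :
    ‖field u t‖ ≤ R + R ^ 2 := by
  have hu₁ s hs : |(u s).1| ≤ R := (norm_fst_le (u s)).trans (hu s hs)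
  have hu₂ s hs : |(u s).2| ≤ R := (norm_snd_le (u s)).trans (hu s hs)
  refine (norm_sub_le _ _).trans (add_le_add (hu t ⟨ht, le_rfl⟩) (norm_prod_le_iff.2 ⟨?_, ?_⟩))
  · exact abs_runningSup_sq_le hu₂
  · exact abs_runningSup_sq_le hu₁

theorem norm_field_sub_field_le (ht : 0 ≤ t) (hu : ∀ s ∈ Icc 0 t, ‖u s‖ ≤ R)
    (hv : ∀ s ∈ Icc 0 t, ‖v s‖ ≤ R) {d : ℝ} (huv : ∀ s ∈ Icc 0 t, ‖u s - v s‖ ≤ d) :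
    ‖field u t - field v t‖ ≤ (1 + 2 * R) * d := by
  have hu₁ s hs : |(u s).1| ≤ R := (norm_fst_le (u s)).trans (hu s hs)
  have hu₂ s hs : |(u s).2| ≤ R := (norm_snd_le (u s)).trans (hu s hs)
  have hv₁ s hs : |(v s).1| ≤ R := (norm_fst_le (v s)).trans (hv s hs)
  have hv₂ s hs : |(v s).2| ≤ R := (norm_snd_le (v s)).trans (hv s hs)
  have huv₁ s hs : |(u s).1 - (v s).1| ≤ d := (norm_fst_le (u s - v s)).trans (huv s hs)
  have huv₂ s hs : |(u s).2 - (v s).2| ≤ d := (norm_snd_le (u s - v s)).trans (huv s hs)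
  have hsplit : field u t - field v t = (u t - v t) -
      (runningSup (fun s => (u s).2 ^ 2) t - runningSup (fun s => (v s).2 ^ 2) t,
        runningSup (fun s => (u s).1 ^ 2) t - runningSup (fun s => (v s).1 ^ 2) t) := by
    ext <;> simp only [field, Prod.fst_sub, Prod.snd_sub] <;> abel
  rw [hsplit, add_mul, one_mul]
  refine (norm_sub_le _ _).trans (add_le_add (huv t ⟨ht, le_rfl⟩) (norm_prod_le_iff.2 ⟨?_, ?_⟩))
  · exact abs_runningSup_sq_sub_runningSup_sq_le ht hu₂ hv₂ huv₂
  · exact abs_runningSup_sq_sub_runningSup_sq_le ht hu₁ hv₁ huv₁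

end field

variable {T : ℝ} (hT : 0 ≤ T)

theorem hasDerivWithinAt_integral_field (z₀ : ℝ × ℝ) (F : C(Icc 0 T, ℝ × ℝ)) {t : ℝ}
    (ht : t ∈ Icc 0 T) :
    HasDerivWithinAt (fun t => z₀ + ∫ s in 0..t, field (IccExtend hT F) s)
      (field (IccExtend hT F) t) (Icc 0 T) t :=
  (hasDerivWithinAt_integral_of_continuousOn
    ((continuousOn_field F.continuous.Icc_extend').mono Icc_subset_Ici_self) ht).const_add z₀

noncomputable def picard (z₀ : ℝ × ℝ) (F : C(Icc 0 T, ℝ × ℝ)) : C(Icc 0 T, ℝ × ℝ) where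
  toFun t := z₀ + ∫ s in 0..(t : ℝ), field (IccExtend hT F) s
  continuous_toFun := by
    have : ContinuousOn (fun t => z₀ + ∫ s in 0..t, field (IccExtend hT F) s) (Icc 0 T) :=
      fun t ht => (hasDerivWithinAt_integral_field hT z₀ F ht).continuousWithinAt
    exact this.comp_continuous continuous_subtype_val Subtype.prop

theorem picard_apply (z₀ : ℝ × ℝ) (F : C(Icc 0 T, ℝ × ℝ)) (t : Icc 0 T) :
    picard hT z₀ F t = z₀ + ∫ s in 0..(t : ℝ), field (IccExtend hT F) s := rfl

variable {R : ℝ}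

theorem mapsTo_picard_closedBall {z₀ : ℝ × ℝ} (hR : ‖z₀‖ + (R + R ^ 2) * T ≤ R) :
    MapsTo (picard hT z₀) (Metric.closedBall 0 R) (Metric.closedBall 0 R) := by
  intro F hF
  rw [mem_closedBall_zero_iff] at hF ⊢
  have hR₀ : 0 ≤ R := (norm_nonneg _).trans hF
  refine (ContinuousMap.norm_le _ hR₀).2 fun t => ?_
  have hint : ‖∫ s in 0..(t : ℝ), field (IccExtend hT F) s‖ ≤ (R + R ^ 2) * T := by
    refine (norm_integral_le_of_norm_le_const (C := R + R ^ 2) fun s hs => ?_).trans ?_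
    · exact norm_field_le (uIoc_of_le t.2.1 ▸ hs).1.le
        fun σ _ => (F.norm_coe_le_norm _).trans hF
    · rw [sub_zero, abs_of_nonneg t.2.1]
      exact mul_le_mul_of_nonneg_left t.2.2 (by positivity)
  rw [picard_apply]
  linarith [norm_add_le z₀ (∫ s in 0..(t : ℝ), field (IccExtend hT F) s)]

theorem dist_picard_apply_le {z₀ : ℝ × ℝ} {F G : C(Icc 0 T, ℝ × ℝ)} (hF : ‖F‖ ≤ R)
    (hG : ‖G‖ ≤ R) {n : ℕ} {D : ℝ} (hD : 0 ≤ D)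
    (hFG : ∀ s : Icc 0 T, dist (F s) (G s) ≤ ((1 + 2 * R) * s) ^ n / n ! * D) (t : Icc 0 T) :
    dist (picard hT z₀ F t) (picard hT z₀ G t) ≤
      ((1 + 2 * R) * t) ^ (n + 1) / (n + 1)! * D := by
  set L := 1 + 2 * R
  have hL : 0 ≤ L := by linarith [(norm_nonneg F).trans hF]
  have hint (H : C(Icc 0 T, ℝ × ℝ)) :
      IntervalIntegrable (field (IccExtend hT H)) MeasureTheory.volume 0 t :=
    ((continuousOn_field H.continuous.Icc_extend').mono
      (by rw [uIcc_of_le t.2.1]; exact Icc_subset_Ici_self)).intervalIntegrable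
  have hpt : ∀ s ∈ Ioc 0 (t : ℝ), ‖field (IccExtend hT F) s - field (IccExtend hT G) s‖ ≤
      L * ((L * s) ^ n / n ! * D) := by
    intro s hs
    refine norm_field_sub_field_le hs.1.le (fun σ _ => (F.norm_coe_le_norm _).trans hF)
      (fun σ _ => (G.norm_coe_le_norm _).trans hG) fun σ hσ => ?_
    have hσT : σ ∈ Icc 0 T := ⟨hσ.1, hσ.2.trans (hs.2.trans t.2.2)⟩
    rw [projIcc_of_mem hT hσT, ← dist_eq_norm]
    refine (hFG ⟨σ, hσT⟩).trans ?_
    have hσ₀ : 0 ≤ σ := hσ.1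
    gcongr
    exact hσ.2
  rw [picard_apply, picard_apply, dist_eq_norm, add_sub_add_left_eq_sub,
    ← integral_sub (hint F) (hint G)]
  calc _ ≤ ∫ s in 0..(t : ℝ), L * ((L * s) ^ n / n ! * D) :=
        norm_integral_le_of_norm_le t.2.1 (MeasureTheory.ae_of_all _ hpt)
          ((by fun_prop : Continuous _).intervalIntegrable _ _)
    _ = (L * t) ^ (n + 1) / (n + 1)! * D := integral_mul_pow_div_factorial L D t n

theorem dist_iterate_picard_le {z₀ : ℝ × ℝ} (hR : ‖z₀‖ + (R + R ^ 2) * T ≤ R) (n : ℕ)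
    {F G : C(Icc 0 T, ℝ × ℝ)} (hF : F ∈ Metric.closedBall 0 R)
    (hG : G ∈ Metric.closedBall 0 R) :
    dist ((picard hT z₀)^[n] F) ((picard hT z₀)^[n] G) ≤
      ((1 + 2 * R) * T) ^ n / n ! * dist F G := by
  have hR₀ : 0 ≤ R := (norm_nonneg F).trans (mem_closedBall_zero_iff.1 hF)
  have hpt : ∀ t : Icc 0 T, dist ((picard hT z₀)^[n] F t) ((picard hT z₀)^[n] G t) ≤
      ((1 + 2 * R) * t) ^ n / n ! * dist F G := by
    induction n with
    | zero => exact fun t => by simpa using ContinuousMap.dist_apply_le_dist t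
    | succ n ih =>
      rw [iterate_succ_apply', iterate_succ_apply']
      have hmaps := (mapsTo_picard_closedBall hT hR).iterate n
      exact dist_picard_apply_le hT (mem_closedBall_zero_iff.1 (hmaps hF))
        (mem_closedBall_zero_iff.1 (hmaps hG)) dist_nonneg ih
  refine (ContinuousMap.dist_le (by positivity)).2 fun t => (hpt t).trans ?_
  have ht₀ : 0 ≤ (t : ℝ) := t.2.1
  gcongr
  exact t.2.2

theorem exists_isFixedPt_picard {z₀ : ℝ × ℝ} (hR₀ : 0 ≤ R)
    (hR : ‖z₀‖ + (R + R ^ 2) * T ≤ R) :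
    ∃ F, IsFixedPt (picard hT z₀) F :=
  let ⟨F, _, hF⟩ := exists_isFixedPt_of_dist_iterate_le Metric.isClosed_closedBall.isComplete
    (Metric.nonempty_closedBall.2 hR₀) (mapsTo_picard_closedBall hT hR) _
    fun n _ hF _ hG => dist_iterate_picard_le hT hR n hF hG
  ⟨F, hF⟩

variable {z₀ : ℝ × ℝ} {F : C(Icc 0 T, ℝ × ℝ)}

theorem IccExtend_eq_of_isFixedPt (hF : IsFixedPt (picard hT z₀) F) {t : ℝ}
    (ht : t ∈ Icc 0 T) :
    IccExtend hT F t = z₀ + ∫ s in 0..t, field (IccExtend hT F) s := by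
  rw [IccExtend_of_mem hT F ht, ← picard_apply hT z₀ F ⟨t, ht⟩, hF.eq]

theorem IccExtend_zero_of_isFixedPt (hF : IsFixedPt (picard hT z₀) F) :
    IccExtend hT F 0 = z₀ := by
  simpa using IccExtend_eq_of_isFixedPt hT hF (left_mem_Icc.2 hT)

theorem hasDerivWithinAt_of_isFixedPt (hF : IsFixedPt (picard hT z₀) F) {t : ℝ}
    (ht : t ∈ Icc 0 T) :
    HasDerivWithinAt (IccExtend hT F) (field (IccExtend hT F) t) (Icc 0 T) t :=
  (hasDerivWithinAt_integral_field hT z₀ F ht).congr_of_mem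
    (fun _ hs => IccExtend_eq_of_isFixedPt hT hF hs) ht

end CoupledMaxSystem

theorem exists_solution_coupled_square_system_with_maxima_general (x₀ y₀ T c₀ : ℝ)
    (hT : 0 < T) (hc₀ : 0 < c₀)
    (h3 : |x₀| + c₀ * T + c₀ ^ 2 * T ≤ c₀) (h4 : |y₀| + c₀ * T + c₀ ^ 2 * T ≤ c₀) :
    ∃ x y : ℝ → ℝ, x 0 = x₀ ∧ y 0 = y₀ ∧
      ∀ t ∈ Set.Icc (0:ℝ) T,
        HasDerivWithinAt x (x t - sSup ((fun s => (y s) ^ 2) '' Set.Icc 0 t)) (Set.Icc 0 T) t ∧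
        HasDerivWithinAt y (y t - sSup ((fun s => (x s) ^ 2) '' Set.Icc 0 t)) (Set.Icc 0 T) t := by
  have hz : ‖(x₀, y₀)‖ + (c₀ + c₀ ^ 2) * T ≤ c₀ := by
    rw [Prod.norm_def, Real.norm_eq_abs, Real.norm_eq_abs, ← max_add_add_right]
    exact max_le (by linarith) (by linarith)
  obtain ⟨F, hF⟩ := CoupledMaxSystem.exists_isFixedPt_picard hT.le hc₀.le hz
  have hu₀ := CoupledMaxSystem.IccExtend_zero_of_isFixedPt hT.le hF
  refine ⟨fun s => (IccExtend hT.le F s).1, fun s => (IccExtend hT.le F s).2,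
    congrArg Prod.fst hu₀, congrArg Prod.snd hu₀, fun t ht => ?_⟩
  have hu := CoupledMaxSystem.hasDerivWithinAt_of_isFixedPt hT.le hF ht
  exact ⟨(hasFDerivAt_fst (𝕜 := ℝ) (p := IccExtend hT.le F t)).comp_hasDerivWithinAt t hu,
    (hasFDerivAt_snd (𝕜 := ℝ) (p := IccExtend hT.le F t)).comp_hasDerivWithinAt t hu⟩

/-- Existence on `[0,T]` for the coupled system with maxima of squares
`ẋ = x − max_{[0,t]} y²`, `ẏ = y − max_{[0,t]} x²`, with `x(0) = x₀ > 0`, `y(0) = y₀ > 0`,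
under the stated smallness conditions on `T` and `c₀`. -/
theorem exists_solution_coupled_square_system_with_maxima (x₀ y₀ T c₀ : ℝ)
    (hx₀ : 0 < x₀) (hy₀ : 0 < y₀) (hT : 0 < T) (hc₀ : 0 < c₀)
    (h1 : |x₀| + |x₀ - y₀ ^ 2| * T ≤ c₀) (h2 : |y₀| + |y₀ - x₀ ^ 2| * T ≤ c₀)
    (h3 : |x₀| + c₀ * T + c₀ ^ 2 * T ≤ c₀) (h4 : |y₀| + c₀ * T + c₀ ^ 2 * T ≤ c₀) :
    ∃ x y : ℝ → ℝ, x 0 = x₀ ∧ y 0 = y₀ ∧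
      ∀ t ∈ Set.Icc (0:ℝ) T,
        HasDerivWithinAt x (x t - sSup ((fun s => (y s) ^ 2) '' Set.Icc 0 t)) (Set.Icc 0 T) t ∧
        HasDerivWithinAt y (y t - sSup ((fun s => (x s) ^ 2) '' Set.Icc 0 t)) (Set.Icc 0 T) t :=
  exists_solution_coupled_square_system_with_maxima_general x₀ y₀ T c₀ hT hc₀ h3 h4
end

section
/- Let a, b, c, d ≥ 0 with a > 0 and c > 0, let x₀ > 0, y₀ > 0, and set A := a x₀ − b y₀ and B := c y₀ − d x₀. Assume A < 0 and B < 0. Then the pair of functions x(t) = x₀ + (A/a)(e^{at} − 1) and y(t) = y₀ + (B/c)(e^{ct} − 1) is a solution on [0,∞) of the system with maxima: ẋ(t) = a x(t) − b max_{s∈[0,t]} y(s), ẏ(t) = c y(t) − d max_{s∈[0,t]} x(s), with x(0) = x₀ and y(0) = y₀. -/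
lemma sSup_image_eq (k K z₀ : ℝ) (hk : 0 < k) (hK : K < 0) (f : ℝ → ℝ)
    (hf : ∀ t, f t = z₀ + (K / k) * (Real.exp (k * t) - 1)) (t : ℝ) (ht : 0 ≤ t) :
    sSup (f '' Set.Icc 0 t) = z₀ := by
  have hgr : IsGreatest (f '' Set.Icc 0 t) z₀ := by
    constructor
    · refine ⟨0, ⟨le_refl 0, ht⟩, ?_⟩
      simp [hf 0]
    · rintro v ⟨s, ⟨hs0, hst⟩, rfl⟩
      rw [hf s]
      have h1 : (1:ℝ) ≤ Real.exp (k * s) := by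
        rw [← Real.exp_zero]
        exact Real.exp_le_exp.mpr (by positivity)
      nlinarith [div_neg_of_neg_of_pos hK hk]
  exact hgr.csSup_eq

lemma deriv_aux (k K z₀ : ℝ) (hk : 0 < k) (f : ℝ → ℝ)
    (hf : ∀ t, f t = z₀ + (K / k) * (Real.exp (k * t) - 1)) (t : ℝ) :
    HasDerivAt f (K * Real.exp (k * t)) t := by
  have h : HasDerivAt (fun t => z₀ + (K / k) * (Real.exp (k * t) - 1))
      (K / k * (k * Real.exp (k * t))) t := by
    have he : HasDerivAt (fun t => Real.exp (k * t)) (Real.exp (k * t) * k) t :=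
      (Real.hasDerivAt_exp (k * t)).comp t (by simpa using (hasDerivAt_id t).const_mul k)
    simpa [mul_comm] using (((he.sub_const 1).const_mul (K / k)).const_add z₀)
  have : K / k * (k * Real.exp (k * t)) = K * Real.exp (k * t) := by
    field_simp
  rw [this] at h
  exact h.congr_of_eventuallyEq (Filter.Eventually.of_forall fun s => (hf s))

/-- With `A = a x₀ − b y₀ < 0`, `B = c y₀ − d x₀ < 0`, the pair
`x(t) = x₀ + (A/a)(e^{at} − 1)`, `y(t) = y₀ + (B/c)(e^{ct} − 1)` solves on `[0,∞)` the
constant-coefficient system with maxima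
`ẋ = a x − b max_{[0,t]} y`, `ẏ = c y − d max_{[0,t]} x`, `x(0) = x₀`, `y(0) = y₀`. -/
theorem explicit_solution_constant_coefficients (a b c d x₀ y₀ A B : ℝ)
    (ha' : 0 ≤ a) (hb : 0 ≤ b) (hc' : 0 ≤ c) (hd : 0 ≤ d) (ha : 0 < a) (hc : 0 < c)
    (hx₀ : 0 < x₀) (hy₀ : 0 < y₀)
    (hA : A = a * x₀ - b * y₀) (hB : B = c * y₀ - d * x₀)
    (hAneg : A < 0) (hBneg : B < 0)
    (x y : ℝ → ℝ)
    (hx : ∀ t, x t = x₀ + (A / a) * (Real.exp (a * t) - 1))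
    (hy : ∀ t, y t = y₀ + (B / c) * (Real.exp (c * t) - 1)) :
    x 0 = x₀ ∧ y 0 = y₀ ∧
      ∀ t ∈ Set.Ici (0:ℝ),
        HasDerivWithinAt x (a * x t - b * sSup (y '' Set.Icc 0 t)) (Set.Ici 0) t ∧
        HasDerivWithinAt y (c * y t - d * sSup (x '' Set.Icc 0 t)) (Set.Ici 0) t := by
  refine ⟨by simp [hx 0], by simp [hy 0], fun t ht => ?_⟩
  rw [Set.mem_Ici] at ht
  rw [sSup_image_eq a A x₀ ha hAneg x hx t ht, sSup_image_eq c B y₀ hc hBneg y hy t ht]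
  constructor
  · have hd := (deriv_aux a A x₀ ha x hx t).hasDerivWithinAt (s := Set.Ici 0)
    have : a * x t - b * y₀ = A * Real.exp (a * t) := by
      rw [hx t]; field_simp; ring_nf; nlinarith [hA]
    rw [this]; exact hd
  · have hd := (deriv_aux c B y₀ hc y hy t).hasDerivWithinAt (s := Set.Ici 0)
    have : c * y t - d * x₀ = B * Real.exp (c * t) := by
      rw [hy t]; field_simp; ring_nf; nlinarith [hB]
    rw [this]; exact hd
end
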